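/- arXiv:1907.06706 — 3 statements merged into one kernel-verified Lean document; each statement's English description precedes it below -/
import Mathlib

section
/- For every i ∈ {1, …, N} the following operator identities hold on smooth complex functions on Ω: Σ_{j=1}^N x_j S_{ij} = x_i + [S, x_i]; Σ_{j=1}^N S_{ij} x_j = x_i − [S, x_i]; Σ_{j=1}^N ∇_j S_{ij} = ∇_i + [S, ∇_i]; Σ_{j=1}^N S_{ij} ∇_j = ∇_i − [S, ∇_i]. -/
noncomputable section

open Finset

/-- Euclidean space `ℝ^N`. -/
abbrev E (N : ℕ) := EuclideanSpace ℝ (Fin N)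

variable {N : ℕ}

/-- The reflection `s_α(x) = x - (2(α,x)/(α,α)) α`. -/
def sRefl (α x : E N) : E N := x - (2 * (inner ℝ α x : ℝ) / (inner ℝ α α : ℝ)) • α

/-- Action of the reflection `s_α` on functions: `(s_α ψ)(x) = ψ(s_α⁻¹ x) = ψ(s_α x)`. -/
def refOp (α : E N) (f : E N → ℂ) : E N → ℂ := fun x => f (sRefl α x)

/-- Multiplication by the `k`-th coordinate. -/
def mulX (k : Fin N) (f : E N → ℂ) : E N → ℂ := fun x => (x k : ℂ) * f x

/-- The partial derivative `∂_i`. -/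
def pd (i : Fin N) (f : E N → ℂ) : E N → ℂ :=
  fun x => fderiv ℝ f x (EuclideanSpace.single i 1)

/-- The Dunkl operator `∇_i = ∂_i − Σ_{α∈𝓡₊} g_α α_i (α,x)⁻¹ s_α`. -/
def dunkl (Rp : Finset (E N)) (g : E N → ℂ) (i : Fin N) (f : E N → ℂ) : E N → ℂ :=
  fun x => pd i f x - ∑ α ∈ Rp, g α * (α i : ℂ) * ((inner ℝ α x : ℝ) : ℂ)⁻¹ * refOp α f x

/-- The operator `S_{ij} = δ_{ij} + Σ_{α∈𝓡₊} (2 g_α α_i α_j/(α,α)) s_α`. -/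
def Sop (Rp : Finset (E N)) (g : E N → ℂ) (i j : Fin N) (f : E N → ℂ) : E N → ℂ :=
  fun x => (if i = j then 1 else 0) * f x
    + ∑ α ∈ Rp, 2 * g α * (α i : ℂ) * (α j : ℂ) / ((inner ℝ α α : ℝ) : ℂ) * refOp α f x

/-- The element `S = −Σ_{α∈𝓡₊} g_α s_α` acting as an operator. -/
def Sbig (Rp : Finset (E N)) (g : E N → ℂ) (f : E N → ℂ) : E N → ℂ :=
  fun x => -∑ α ∈ Rp, g α * refOp α f x

/-- The Dunkl angular momentum `L_{ij} = x_i ∇_j − x_j ∇_i`. -/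
def Lop (Rp : Finset (E N)) (g : E N → ℂ) (i j : Fin N) (f : E N → ℂ) : E N → ℂ :=
  fun x => (x i : ℂ) * dunkl Rp g j f x - (x j : ℂ) * dunkl Rp g i f x

/-- The Dunkl Laplacian `∇² = Σ_j ∇_j²`. -/
def lapD (Rp : Finset (E N)) (g : E N → ℂ) (f : E N → ℂ) : E N → ℂ :=
  fun x => ∑ j, dunkl Rp g j (dunkl Rp g j f) x

/-- The Dunkl--Coulomb Hamiltonian `ℋ_γ = Σ_i ∇_i² + 2γ r⁻¹`. -/
def ham (Rp : Finset (E N)) (g : E N → ℂ) (γ : ℂ) (f : E N → ℂ) : E N → ℂ :=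
  fun x => lapD Rp g f x + 2 * γ * (‖x‖ : ℂ)⁻¹ * f x

/-- The Dunkl Laplace--Runge--Lenz vector component
`A_i = −(1/2) Σ_j {L_{ij}, ∇_j} + (1/2)[∇_i, S] − γ x_i r⁻¹`. -/
def lrl (Rp : Finset (E N)) (g : E N → ℂ) (γ : ℂ) (i : Fin N) (f : E N → ℂ) : E N → ℂ :=
  fun x =>
    -(1 / 2 : ℂ) * ∑ j, (Lop Rp g i j (dunkl Rp g j f) x + dunkl Rp g j (Lop Rp g i j f) x)
    + (1 / 2 : ℂ) * (dunkl Rp g i (Sbig Rp g f) x - Sbig Rp g (dunkl Rp g i f) x)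
    - γ * (x i : ℂ) * (‖x‖ : ℂ)⁻¹ * f x

/-- The Euler operator `r∂_r = Σ_k x_k ∂_k`. -/
def euler (f : E N → ℂ) : E N → ℂ := fun x => ∑ k, (x k : ℂ) * pd k f x

/-!
The first two identities are direct computations with `s_α x = x - 2(α,x)/(α,α) α`.
The last two rest on the `W`-equivariance of the Dunkl operators: writing `∇_ξ = Σ_j ξ_j ∇_j`,
one has `∇_ξ ∘ s_α = s_α ∘ ∇_{s_α ξ}`, because `s_α` permutes the positive roots up to sign and
`g` is `W`-invariant. Hence `[s_α, ∇_i] = (2α_i/(α,α)) s_α ∇_α` and `∇_α s_α = -s_α ∇_α`, and both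
sides of the third (fourth) identity equal `∇_i ∓ Σ_α (2 g_α α_i/(α,α)) s_α ∇_α`.
-/

lemma sRefl_eq_reflection (α x : E N) : sRefl α x = (ℝ ∙ α)ᗮ.reflection x := by
  rw [Submodule.reflection_orthogonal_apply, Submodule.reflection_singleton_apply, sRefl,
    real_inner_self_eq_norm_sq]
  simp only [RCLike.ofReal_real_eq_id, id]
  module

lemma sRefl_sRefl (α x : E N) : sRefl α (sRefl α x) = x := by
  simp only [sRefl_eq_reflection, Submodule.reflection_reflection]

lemma inner_sRefl_sRefl (α u v : E N) :
    (inner ℝ (sRefl α u) (sRefl α v) : ℝ) = inner ℝ u v := by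
  simp only [sRefl_eq_reflection, LinearIsometryEquiv.inner_map_map]

lemma sRefl_self (α : E N) : sRefl α α = -α := by
  rw [sRefl_eq_reflection, Submodule.reflection_orthogonalComplement_singleton_eq_neg]

lemma sRefl_neg_left (α x : E N) : sRefl (-α) x = sRefl α x := by
  simp [sRefl, neg_div]

lemma sRefl_neg_right (α x : E N) : sRefl α (-x) = -sRefl α x := by
  simp only [sRefl_eq_reflection, map_neg]

lemma sRefl_sub (α x y : E N) : sRefl α (x - y) = sRefl α x - sRefl α y := by
  simp only [sRefl_eq_reflection, map_sub]

lemma sRefl_smul (α x : E N) (c : ℝ) : sRefl α (c • x) = c • sRefl α x := by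
  simp only [sRefl_eq_reflection, map_smul]

lemma inner_sRefl_comm (α β x : E N) :
    (inner ℝ β (sRefl α x) : ℝ) = inner ℝ (sRefl α β) x := by
  rw [← inner_sRefl_sRefl α, sRefl_sRefl]

lemma inner_sRefl_self (α x : E N) : (inner ℝ α (sRefl α x) : ℝ) = -inner ℝ α x := by
  rw [inner_sRefl_comm, sRefl_self, inner_neg_left]

lemma sRefl_sRefl_sRefl (α β x : E N) :
    sRefl (sRefl α β) (sRefl α x) = sRefl α (sRefl β x) := by
  rw [sRefl.eq_1 (sRefl α β), inner_sRefl_sRefl, inner_sRefl_sRefl, ← sRefl_smul, ← sRefl_sub,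
    sRefl.eq_1 β]

lemma inner_single (α : E N) (j : Fin N) :
    (inner ℝ α (EuclideanSpace.single j 1) : ℝ) = α j := by
  simp [EuclideanSpace.inner_single_right]

lemma sRefl_single (α : E N) (j : Fin N) :
    sRefl α (EuclideanSpace.single j 1) =
      EuclideanSpace.single j 1 - (2 * α j / (inner ℝ α α : ℝ)) • α := by
  rw [sRefl, inner_single]

lemma sRefl_apply (α x : E N) (j : Fin N) :
    sRefl α x j = x j - 2 * (inner ℝ α x : ℝ) / (inner ℝ α α : ℝ) * α j := by
  simp [sRefl]

lemma inner_eq_sum_mul (α v : E N) :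
    ((inner ℝ α v : ℝ) : ℂ) = ∑ j, (α j : ℂ) * (v j : ℂ) := by
  simp [PiLp.inner_apply, mul_comm]

lemma sum_comp_eq_of_even {V M : Type*} [AddCommGroup V] [AddCommMonoid M] {R P : Finset V}
    (hPR : P ⊆ R) (hpos : ∀ v ∈ R, (v ∈ P ∧ -v ∉ P) ∨ (-v ∈ P ∧ v ∉ P))
    {σ : V → V} (hσ : Function.Involutive σ) (hσneg : ∀ v, σ (-v) = -σ v)
    (hσR : ∀ v ∈ R, σ v ∈ R) {T : V → M} (hT : ∀ v ∈ R, T (-v) = T v) :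
    ∑ v ∈ P, T (σ v) = ∑ v ∈ P, T v := by
  classical
  set φ : V → V := fun v => if σ v ∈ P then σ v else -σ v with hφ
  have hφP : ∀ v ∈ P, φ v ∈ P := by
    intro v hv
    rcases hpos (σ v) (hσR v (hPR hv)) with ⟨h, -⟩ | ⟨h, h'⟩
    · simp [hφ, h]
    · simp [hφ, h, h']
  have hφφ : ∀ v ∈ P, φ (φ v) = v := by
    intro v hv
    by_cases h : σ v ∈ P
    · simp [hφ, h, hσ v, hv]
    · have hv' : -v ∉ P := by
        rcases hpos v (hPR hv) with ⟨-, h'⟩ | ⟨-, h'⟩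
        · exact h'
        · exact absurd hv h'
      simp [hφ, h, hσneg, hσ v, hv']
  refine sum_nbij' φ φ hφP hφP hφφ hφφ fun v hv => ?_
  by_cases h : σ v ∈ P
  · simp [hφ, h]
  · simp [hφ, h, hT _ (hσR v (hPR hv))]

structure IsInvariantPositiveSystem (R Rp : Finset (E N)) (g : E N → ℂ) : Prop where
  sRefl_mem : ∀ α ∈ R, ∀ β ∈ R, sRefl α β ∈ R
  subset : Rp ⊆ R
  pos : ∀ α ∈ R, (α ∈ Rp ∧ -α ∉ Rp) ∨ (-α ∈ Rp ∧ α ∉ Rp)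
  g_sRefl : ∀ α ∈ R, ∀ β ∈ R, g (sRefl β α) = g α

lemma refOp_eq_comp (α : E N) (f : E N → ℂ) :
    refOp α f = f ∘ (ℝ ∙ α)ᗮ.reflection.toContinuousLinearEquiv := by
  ext x
  simp [refOp, sRefl_eq_reflection]

lemma fderiv_refOp (α : E N) (f : E N → ℂ) (x ξ : E N) :
    fderiv ℝ (refOp α f) x ξ = fderiv ℝ f (sRefl α x) (sRefl α ξ) := by
  rw [refOp_eq_comp, ContinuousLinearEquiv.comp_right_fderiv]
  simp [sRefl_eq_reflection]

lemma differentiableAt_refOp_iff {α : E N} {f : E N → ℂ} {x : E N} :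
    DifferentiableAt ℝ (refOp α f) x ↔ DifferentiableAt ℝ f (sRefl α x) := by
  rw [refOp_eq_comp, ContinuousLinearEquiv.comp_right_differentiableAt_iff]
  simp [sRefl_eq_reflection]

/-- `dunklDir Rp g f x ξ = (∇_ξ f)(x)`, so that `∇_i = ∇_{e_i}`. -/
def dunklDir (Rp : Finset (E N)) (g : E N → ℂ) (f : E N → ℂ) (x : E N) : E N →L[ℝ] ℂ :=
  fderiv ℝ f x - ∑ β ∈ Rp,
    (g β * ((inner ℝ β x : ℝ) : ℂ)⁻¹ * refOp β f x) • (Complex.ofRealCLM ∘L innerSL ℝ β)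

lemma dunklDir_apply (Rp : Finset (E N)) (g f : E N → ℂ) (x ξ : E N) :
    dunklDir Rp g f x ξ = fderiv ℝ f x ξ
      - ∑ β ∈ Rp, g β * ((inner ℝ β ξ : ℝ) : ℂ) * ((inner ℝ β x : ℝ) : ℂ)⁻¹ * refOp β f x := by
  simp only [dunklDir, sub_apply, _root_.sum_apply, smul_apply, ContinuousLinearMap.comp_apply,
    coe_innerSL_apply, Complex.ofRealCLM_apply, smul_eq_mul, mul_right_comm _ (Complex.ofReal _)]

lemma dunkl_eq_dunklDir (Rp : Finset (E N)) (g f : E N → ℂ) (i : Fin N) (x : E N) :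
    dunkl Rp g i f x = dunklDir Rp g f x (EuclideanSpace.single i 1) := by
  simp only [dunklDir_apply, inner_single]
  rfl

lemma sum_mul_dunkl (Rp : Finset (E N)) (g f : E N → ℂ) (x ξ : E N) :
    ∑ j, (ξ j : ℂ) * dunkl Rp g j f x = dunklDir Rp g f x ξ := by
  conv_rhs => rw [← (EuclideanSpace.basisFun (Fin N) ℝ).sum_repr ξ]
  simp [dunkl_eq_dunklDir, EuclideanSpace.basisFun_apply, Complex.real_smul]

lemma mem_nhds_regular (R : Finset (E N)) {x : E N} (hx : ∀ α ∈ R, (inner ℝ α x : ℝ) ≠ 0) :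
    {y : E N | ∀ α ∈ R, (inner ℝ α y : ℝ) ≠ 0} ∈ nhds x :=
  (Filter.eventually_all_finset R).2 fun α hα =>
    ((continuous_const.inner continuous_id).continuousAt).eventually_ne (hx α hα)

section Linearity

variable (Rp : Finset (E N)) (g : E N → ℂ) (i : Fin N) {x : E N}

lemma dunkl_add {f h : E N → ℂ} (hf : DifferentiableAt ℝ f x) (hh : DifferentiableAt ℝ h x) :
    dunkl Rp g i (fun y => f y + h y) x = dunkl Rp g i f x + dunkl Rp g i h x := by
  simp only [dunkl, pd, refOp, fderiv_fun_add hf hh, add_apply, mul_add, sum_add_distrib]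
  ring

lemma dunkl_const_mul {f : E N → ℂ} (hf : DifferentiableAt ℝ f x) (c : ℂ) :
    dunkl Rp g i (fun y => c * f y) x = c * dunkl Rp g i f x := by
  simp only [dunkl, pd, refOp, fderiv_const_mul hf, smul_apply, smul_eq_mul, mul_sub, mul_sum]
  congr 1
  exact sum_congr rfl fun β _ => by ring

lemma dunkl_neg (f : E N → ℂ) : dunkl Rp g i (fun y => -f y) x = -dunkl Rp g i f x := by
  simp only [dunkl, pd, refOp, fderiv_fun_neg, neg_apply, mul_neg, sum_neg_distrib]
  ring

lemma dunkl_sum {ι : Type*} (s : Finset ι) {h : ι → E N → ℂ}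
    (hh : ∀ a ∈ s, DifferentiableAt ℝ (h a) x) :
    dunkl Rp g i (fun y => ∑ a ∈ s, h a y) x = ∑ a ∈ s, dunkl Rp g i (h a) x := by
  simp only [dunkl, pd, refOp, fderiv_fun_sum hh, _root_.sum_apply, mul_sum, sum_sub_distrib]
  rw [sum_comm]

end Linearity

section CoordinateIdentities

variable (Rp : Finset (E N)) (g f : E N → ℂ) (i : Fin N) (x : E N)

lemma Sbig_mulX_sub_mulX_Sbig :
    Sbig Rp g (mulX i f) x - mulX i (Sbig Rp g f) x
      = ∑ α ∈ Rp, 2 * g α * (α i : ℂ) / ((inner ℝ α α : ℝ) : ℂ)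
          * ((inner ℝ α x : ℝ) : ℂ) * f (sRefl α x) := by
  simp only [Sbig, mulX, refOp, sRefl_apply]
  rw [mul_neg, sub_neg_eq_add, mul_sum, ← sum_neg_distrib, ← sum_add_distrib]
  refine sum_congr rfl fun α _ => ?_
  push_cast
  ring

lemma sum_mulX_Sop :
    ∑ j, mulX j (Sop Rp g i j f) x
      = mulX i f x + ∑ α ∈ Rp, 2 * g α * (α i : ℂ) / ((inner ℝ α α : ℝ) : ℂ)
          * ((inner ℝ α x : ℝ) : ℂ) * f (sRefl α x) := by
  simp only [mulX, Sop, refOp, mul_add, sum_add_distrib, ite_mul, one_mul, zero_mul, mul_ite,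
    mul_zero, sum_ite_eq, mem_univ, if_true, mul_sum]
  rw [sum_comm]
  congr 1
  refine sum_congr rfl fun α _ => ?_
  simp only [inner_eq_sum_mul α x, mul_sum, sum_mul]
  exact sum_congr rfl fun j _ => by ring

lemma sum_Sop_mulX :
    ∑ j, Sop Rp g i j (mulX j f) x
      = mulX i f x - ∑ α ∈ Rp, 2 * g α * (α i : ℂ) / ((inner ℝ α α : ℝ) : ℂ)
          * ((inner ℝ α x : ℝ) : ℂ) * f (sRefl α x) := by
  simp only [mulX, Sop, refOp, sum_add_distrib, ite_mul, one_mul, zero_mul, sum_ite_eq,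
    mem_univ, if_true, sub_eq_add_neg, ← sum_neg_distrib]
  rw [sum_comm]
  congr 1
  refine sum_congr rfl fun α _ => ?_
  have h : ((inner ℝ α x : ℝ) : ℂ) = -∑ j, (α j : ℂ) * (sRefl α x j : ℂ) := by
    rw [← inner_eq_sum_mul, inner_sRefl_self, Complex.ofReal_neg, neg_neg]
  rw [h, mul_neg, neg_mul, neg_neg, mul_sum, sum_mul]
  exact sum_congr rfl fun j _ => by ring

lemma sum_Sop_dunkl :
    ∑ j, Sop Rp g i j (dunkl Rp g j f) x
      = dunkl Rp g i f x + ∑ α ∈ Rp, 2 * g α * (α i : ℂ) / ((inner ℝ α α : ℝ) : ℂ)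
          * dunklDir Rp g f (sRefl α x) α := by
  simp only [Sop, refOp, sum_add_distrib, ite_mul, one_mul, zero_mul, sum_ite_eq, mem_univ,
    if_true]
  rw [sum_comm]
  congr 1
  refine sum_congr rfl fun α _ => ?_
  rw [← sum_mul_dunkl, mul_sum]
  exact sum_congr rfl fun j _ => by ring

end CoordinateIdentities

section Equivariance

variable {R Rp : Finset (E N)} {g : E N → ℂ}

lemma dunklDir_refOp (hR : IsInvariantPositiveSystem R Rp g)
    {α : E N} (hα : α ∈ Rp) (f : E N → ℂ) (x ξ : E N) :
    dunklDir Rp g (refOp α f) x ξ = dunklDir Rp g f (sRefl α x) (sRefl α ξ) := by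
  simp only [dunklDir_apply, fderiv_refOp]
  congr 1
  refine Eq.trans (sum_congr rfl fun β hβ => ?_) (sum_comp_eq_of_even hR.subset hR.pos
    (σ := sRefl α) (sRefl_sRefl α) (sRefl_neg_right α) (hR.sRefl_mem α (hR.subset hα))
    (T := fun β => g β * ((inner ℝ β (sRefl α ξ) : ℝ) : ℂ) * ((inner ℝ β (sRefl α x) : ℝ) : ℂ)⁻¹
      * refOp β f (sRefl α x)) fun β hβ => ?_)
  · simp only [refOp, hR.g_sRefl β (hR.subset hβ) α (hR.subset hα), inner_sRefl_sRefl,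
      sRefl_sRefl_sRefl]
  · have hgneg : g (-β) = g β := by simpa only [sRefl_self] using hR.g_sRefl β hβ β hβ
    simp only [refOp, hgneg, inner_neg_left, sRefl_neg_left, Complex.ofReal_neg, inv_neg]
    ring

lemma dunkl_refOp (hR : IsInvariantPositiveSystem R Rp g)
    {α : E N} (hα : α ∈ Rp) (f : E N → ℂ) (i : Fin N) (x : E N) :
    dunkl Rp g i (refOp α f) x = dunkl Rp g i f (sRefl α x)
      - 2 * (α i : ℂ) / ((inner ℝ α α : ℝ) : ℂ) * dunklDir Rp g f (sRefl α x) α := by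
  rw [dunkl_eq_dunklDir, dunklDir_refOp hR hα, sRefl_single, map_sub, map_smul,
    dunkl_eq_dunklDir, Complex.real_smul]
  push_cast
  rfl

lemma dunklDir_refOp_self (hR : IsInvariantPositiveSystem R Rp g)
    {α : E N} (hα : α ∈ Rp) (f : E N → ℂ) (x : E N) :
    dunklDir Rp g (refOp α f) x α = -dunklDir Rp g f (sRefl α x) α := by
  rw [dunklDir_refOp hR hα, sRefl_self, map_neg]


lemma Sbig_dunkl_sub_dunkl_Sbig (hR : IsInvariantPositiveSystem R Rp g)
    (i : Fin N) {f : E N → ℂ} {x : E N}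
    (hdiff : ∀ α ∈ Rp, DifferentiableAt ℝ f (sRefl α x)) :
    Sbig Rp g (dunkl Rp g i f) x - dunkl Rp g i (Sbig Rp g f) x
      = -∑ α ∈ Rp, 2 * g α * (α i : ℂ) / ((inner ℝ α α : ℝ) : ℂ)
          * dunklDir Rp g f (sRefl α x) α := by
  have hdiff' : ∀ α ∈ Rp, DifferentiableAt ℝ (refOp α f) x := fun α hα =>
    differentiableAt_refOp_iff.mpr (hdiff α hα)
  unfold Sbig
  rw [dunkl_neg, dunkl_sum _ _ _ _ fun α hα => (hdiff' α hα).const_mul _, sub_neg_eq_add,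
    ← sum_neg_distrib, ← sum_add_distrib, ← sum_neg_distrib]
  refine sum_congr rfl fun α hα => ?_
  rw [dunkl_const_mul _ _ _ (hdiff' α hα), dunkl_refOp hR hα, refOp]
  ring

lemma sum_dunkl_Sop (hR : IsInvariantPositiveSystem R Rp g)
    (i : Fin N) {f : E N → ℂ} {x : E N} (hdx : DifferentiableAt ℝ f x)
    (hdiff : ∀ α ∈ Rp, DifferentiableAt ℝ f (sRefl α x)) :
    ∑ j, dunkl Rp g j (Sop Rp g i j f) x
      = dunkl Rp g i f x - ∑ α ∈ Rp, 2 * g α * (α i : ℂ) / ((inner ℝ α α : ℝ) : ℂ)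
          * dunklDir Rp g f (sRefl α x) α := by
  have hdiff' : ∀ α ∈ Rp, DifferentiableAt ℝ (refOp α f) x := fun α hα =>
    differentiableAt_refOp_iff.mpr (hdiff α hα)
  have hterm : ∀ j, dunkl Rp g j (Sop Rp g i j f) x
      = (if i = j then 1 else 0) * dunkl Rp g j f x + ∑ α ∈ Rp,
          2 * g α * (α i : ℂ) * (α j : ℂ) / ((inner ℝ α α : ℝ) : ℂ)
            * dunkl Rp g j (refOp α f) x := by
    intro j
    unfold Sop
    rw [dunkl_add _ _ _ (hdx.const_mul _)
      (DifferentiableAt.fun_sum fun α hα => (hdiff' α hα).const_mul _),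
      dunkl_const_mul _ _ _ hdx, dunkl_sum _ _ _ _ fun α hα => (hdiff' α hα).const_mul _]
    congr 1
    exact sum_congr rfl fun α hα => dunkl_const_mul _ _ _ (hdiff' α hα) _
  simp only [hterm, sum_add_distrib, ite_mul, one_mul, zero_mul, sum_ite_eq, mem_univ, if_true,
    sub_eq_add_neg, ← sum_neg_distrib]
  rw [sum_comm]
  congr 1
  refine sum_congr rfl fun α hα => ?_
  rw [← mul_neg, ← dunklDir_refOp_self hR hα, ← sum_mul_dunkl, mul_sum]
  exact sum_congr rfl fun j _ => by ring

end Equivariance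

theorem statement2_general
    (R Rp : Finset (E N)) (g : E N → ℂ)
    (hRinv : ∀ α ∈ R, ∀ β ∈ R, sRefl α β ∈ R)
    (hsub : Rp ⊆ R)
    (hpos : ∀ α ∈ R, (α ∈ Rp ∧ -α ∉ Rp) ∨ (-α ∈ Rp ∧ α ∉ Rp))
    (hg : ∀ α ∈ R, ∀ β ∈ R, g (sRefl β α) = g α)
    (i : Fin N)
    (f : E N → ℂ)
    (hf : ContDiffOn ℝ (⊤ : ℕ∞) f {x : E N | ∀ α ∈ R, (inner ℝ α x : ℝ) ≠ 0})
    (x : E N) (hx : ∀ α ∈ R, (inner ℝ α x : ℝ) ≠ 0) :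
    (∑ j, mulX j (Sop Rp g i j f) x
        = mulX i f x + (Sbig Rp g (mulX i f) x - mulX i (Sbig Rp g f) x))
    ∧ (∑ j, Sop Rp g i j (mulX j f) x
        = mulX i f x - (Sbig Rp g (mulX i f) x - mulX i (Sbig Rp g f) x))
    ∧ (∑ j, dunkl Rp g j (Sop Rp g i j f) x
        = dunkl Rp g i f x
          + (Sbig Rp g (dunkl Rp g i f) x - dunkl Rp g i (Sbig Rp g f) x))
    ∧ (∑ j, Sop Rp g i j (dunkl Rp g j f) x
        = dunkl Rp g i f x
          - (Sbig Rp g (dunkl Rp g i f) x - dunkl Rp g i (Sbig Rp g f) x)) := by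
  have hR : IsInvariantPositiveSystem R Rp g := ⟨hRinv, hsub, hpos, hg⟩
  have hdiff : ∀ y, (∀ β ∈ R, (inner ℝ β y : ℝ) ≠ 0) → DifferentiableAt ℝ f y := fun y hy =>
    (hf.contDiffAt (mem_nhds_regular R hy)).differentiableAt (by simp)
  have hdiff_refl : ∀ α ∈ Rp, DifferentiableAt ℝ f (sRefl α x) := fun α hα =>
    hdiff _ fun β hβ => by rw [inner_sRefl_comm]; exact hx _ (hRinv α (hsub hα) β hβ)
  refine ⟨?_, ?_, ?_, ?_⟩
  · rw [sum_mulX_Sop, Sbig_mulX_sub_mulX_Sbig]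
  · rw [sum_Sop_mulX, Sbig_mulX_sub_mulX_Sbig]
  · rw [sum_dunkl_Sop hR i (hdiff x hx) hdiff_refl,
      Sbig_dunkl_sub_dunkl_Sbig hR i hdiff_refl, sub_eq_add_neg]
  · rw [sum_Sop_dunkl, Sbig_dunkl_sub_dunkl_Sbig hR i hdiff_refl, sub_neg_eq_add]

/-- `Σ_j x_j S_{ij} = x_i + [S, x_i]`, `Σ_j S_{ij} x_j = x_i − [S, x_i]`,
`Σ_j ∇_j S_{ij} = ∇_i + [S, ∇_i]`, `Σ_j S_{ij} ∇_j = ∇_i − [S, ∇_i]`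
as operators on smooth complex functions on Ω. -/
theorem statement2
    (R Rp : Finset (E N)) (g : E N → ℂ)
    (hR0 : ∀ α ∈ R, α ≠ (0 : E N))
    (hred : ∀ α ∈ R, ∀ c : ℝ, c • α ∈ R → c = 1 ∨ c = -1)
    (hRinv : ∀ α ∈ R, ∀ β ∈ R, sRefl α β ∈ R)
    (hsub : Rp ⊆ R)
    (hpos : ∀ α ∈ R, (α ∈ Rp ∧ -α ∉ Rp) ∨ (-α ∈ Rp ∧ α ∉ Rp))
    (hg : ∀ α ∈ R, ∀ β ∈ R, g (sRefl β α) = g α)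
    (i : Fin N)
    (f : E N → ℂ)
    (hf : ContDiffOn ℝ (⊤ : ℕ∞) f {x : E N | ∀ α ∈ R, (inner ℝ α x : ℝ) ≠ 0})
    (x : E N) (hx : ∀ α ∈ R, (inner ℝ α x : ℝ) ≠ 0) :
    (∑ j, mulX j (Sop Rp g i j f) x
        = mulX i f x + (Sbig Rp g (mulX i f) x - mulX i (Sbig Rp g f) x))
    ∧ (∑ j, Sop Rp g i j (mulX j f) x
        = mulX i f x - (Sbig Rp g (mulX i f) x - mulX i (Sbig Rp g f) x))
    ∧ (∑ j, dunkl Rp g j (Sop Rp g i j f) x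
        = dunkl Rp g i f x
          + (Sbig Rp g (dunkl Rp g i f) x - dunkl Rp g i (Sbig Rp g f) x))
    ∧ (∑ j, Sop Rp g i j (dunkl Rp g j f) x
        = dunkl Rp g i f x
          - (Sbig Rp g (dunkl Rp g i f) x - dunkl Rp g i (Sbig Rp g f) x)) :=
  statement2_general R Rp g hRinv hsub hpos hg i f hf x hx
end
end

section
/- Every monomial M_{i₁j₁}^{n₁} ⋯ M_{i_k j_k}^{n_k} in the classical angular momenta (pairwise distinct pairs (i_s, j_s) with 1 ≤ i_s < j_s ≤ N, exponents n_s ≥ 1) can be represented as a ℂ-linear combination of monomials in the classical angular momenta which have no crossings. -/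
noncomputable section

open Finset MvPolynomial

/-- The polynomial ring `ℂ[x_1, …, x_N, p_1, …, p_N]`. -/
abbrev PR (N : ℕ) := MvPolynomial (Fin N ⊕ Fin N) ℂ

/-- The classical angular momentum `M_{ij} = x_i p_j − x_j p_i`. -/
def Mang {N : ℕ} (i j : Fin N) : PR N :=
  X (Sum.inl i) * X (Sum.inr j) - X (Sum.inl j) * X (Sum.inr i)

/-- The monomial `∏_{i<j} M_{ij}^{n_{ij}}` in the classical angular momenta. -/
def monM {N : ℕ} (n : Fin N → Fin N → ℕ) : PR N :=
  ∏ i, ∏ j, if i < j then Mang i j ^ n i j else 1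

/-- The arcs of the monomial with exponents `n`: an arc `(i, j)` (as natural numbers)
for each pair `i < j` with `n i j ≠ 0`. -/
def ArcM {N : ℕ} (n : Fin N → Fin N → ℕ) (p : ℕ × ℕ) : Prop :=
  ∃ i j : Fin N, i < j ∧ n i j ≠ 0 ∧ p = ((i : ℕ), (j : ℕ))

/-- The monomial with exponents `n` has no crossings: no two of its arcs `(a,b)`, `(c,d)`
satisfy `a < c < b < d`. -/
def NoCrossM {N : ℕ} (n : Fin N → Fin N → ℕ) : Prop :=
  ∀ p q : ℕ × ℕ, ArcM n p → ArcM n q → ¬(p.1 < q.1 ∧ q.1 < p.2 ∧ p.2 < q.2)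

/-!
Every crossing `a < b < c < d` of arcs `(a, c)`, `(b, d)` is resolved by the Plücker relation
`M_{ac} M_{bd} = M_{ab} M_{cd} + M_{ad} M_{bc}`. Count crossings with multiplicity: every arc
crosses `(a, b)` and `(c, d)` together at most as often as it crosses `(a, c)` and `(b, d)`, and
likewise for `(a, d)` and `(b, c)`, while the resolved pair no longer crosses itself. So both
terms have strictly fewer crossings, and induction on the crossing number concludes.
-/

def crossInd (i j k l : ℕ) : ℕ := if i < k ∧ k < j ∧ j < l then 1 else 0

def crossSym (i j k l : ℕ) : ℕ := crossInd i j k l + crossInd k l i j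

lemma crossSym_disjoint_le {a b c d : ℕ} (hab : a < b) (hbc : b < c) (hcd : c < d)
    (e f : ℕ) :
    crossSym e f a b + crossSym e f c d ≤ crossSym e f a c + crossSym e f b d := by
  simp only [crossSym, crossInd]; split_ifs <;> omega

lemma crossSym_nested_le {a b c d : ℕ} (hab : a < b) (hbc : b < c) (hcd : c < d)
    (e f : ℕ) :
    crossSym e f a d + crossSym e f b c ≤ crossSym e f a c + crossSym e f b d := by
  simp only [crossSym, crossInd]; split_ifs <;> omega

section Crossings

variable {N : ℕ}

def singleArc (a b : Fin N) : Fin N → Fin N → ℕ := fun i j => if i = a ∧ j = b then 1 else 0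

def crossingNumber (m : Fin N → Fin N → ℕ) : ℕ :=
  ∑ i, ∑ j, ∑ k, ∑ l, m i j * m k l * crossInd i j k l

def crossingsWith (m : Fin N → Fin N → ℕ) (a b : Fin N) : ℕ :=
  ∑ i, ∑ j, m i j * crossSym i j a b

lemma crossingsWith_add (m m' : Fin N → Fin N → ℕ) (a b : Fin N) :
    crossingsWith (m + m') a b = crossingsWith m a b + crossingsWith m' a b := by
  simp only [crossingsWith, Pi.add_apply, add_mul, sum_add_distrib]

lemma crossingsWith_singleArc (a b c d : Fin N) :
    crossingsWith (singleArc a b) c d = crossSym a b c d := by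
  simp [crossingsWith, singleArc, ite_and]

lemma crossingNumber_add_singleArc (m : Fin N → Fin N → ℕ) (a b : Fin N) :
    crossingNumber (m + singleArc a b) = crossingNumber m + crossingsWith m a b := by
  have h₁ : ∑ i, ∑ j, ∑ k, ∑ l, m i j * singleArc a b k l * crossInd i j k l =
      ∑ i, ∑ j, m i j * crossInd i j a b := by
    simp [singleArc, ite_and]
  have h₂ : ∑ i, ∑ j, ∑ k, ∑ l, singleArc a b i j * m k l * crossInd i j k l =
      ∑ i, ∑ j, m i j * crossInd a b i j := by
    simp [singleArc, ite_and]
  have h₃ : ∑ i, ∑ j, ∑ k, ∑ l, singleArc a b i j * singleArc a b k l * crossInd i j k l = 0 := by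
    simp [singleArc, ite_and, show crossInd a b a b = 0 by simp [crossInd]]
  simp only [crossingNumber, crossingsWith, crossSym, Pi.add_apply, add_mul, mul_add,
    sum_add_distrib, h₁, h₂, h₃]
  ring

lemma crossingNumber_add_singleArc_add_singleArc (m : Fin N → Fin N → ℕ) (a b c d : Fin N) :
    crossingNumber (m + singleArc a b + singleArc c d) =
      crossingNumber m + crossingsWith m a b + crossingsWith m c d + crossSym a b c d := by
  rw [crossingNumber_add_singleArc, crossingNumber_add_singleArc, crossingsWith_add,
    crossingsWith_singleArc]
  ring

lemma crossingsWith_add_le_of_crossSym_le (m : Fin N → Fin N → ℕ) {a b c d a' b' c' d' : Fin N}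
    (h : ∀ e f, crossSym e f a b + crossSym e f c d ≤ crossSym e f a' b' + crossSym e f c' d') :
    crossingsWith m a b + crossingsWith m c d ≤ crossingsWith m a' b' + crossingsWith m c' d' := by
  simp only [crossingsWith, ← sum_add_distrib, ← mul_add]
  exact sum_le_sum fun i _ => sum_le_sum fun j _ => Nat.mul_le_mul_left _ (h i j)

lemma exists_eq_add_singleArc {m : Fin N → Fin N → ℕ} {a b : Fin N} (h : m a b ≠ 0) :
    ∃ m', m = m' + singleArc a b := by
  refine ⟨m - singleArc a b, funext₂ fun i j => ?_⟩
  simp only [Pi.add_apply, Pi.sub_apply, singleArc]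
  split_ifs with hij
  · obtain ⟨rfl, rfl⟩ := hij; omega
  · omega

end Crossings

section Monomials

variable {N : ℕ}

lemma Mang_mul_Mang (a b c d : Fin N) :
    Mang a c * Mang b d = Mang a b * Mang c d + Mang a d * Mang b c := by
  unfold Mang; ring

lemma monM_add (m m' : Fin N → Fin N → ℕ) : monM (m + m') = monM m * monM m' := by
  simp only [monM, ← prod_mul_distrib]
  refine prod_congr rfl fun i _ => prod_congr rfl fun j _ => ?_
  split_ifs <;> simp [pow_add]

lemma monM_singleArc {a b : Fin N} (hab : a < b) : monM (singleArc a b) = Mang a b := by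
  rw [monM, prod_eq_single a, prod_eq_single b] <;> intros <;> simp_all [singleArc]

lemma monM_add_singleArc_add_singleArc (m : Fin N → Fin N → ℕ) {a b c d : Fin N}
    (hab : a < b) (hcd : c < d) :
    monM (m + singleArc a b + singleArc c d) = monM m * (Mang a b * Mang c d) := by
  rw [monM_add, monM_add, monM_singleArc hab, monM_singleArc hcd, mul_assoc]

lemma exists_resolution_of_not_noCrossM {n : Fin N → Fin N → ℕ} (h : ¬NoCrossM n) :
    ∃ n₁ n₂ : Fin N → Fin N → ℕ, monM n = monM n₁ + monM n₂ ∧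
      crossingNumber n₁ < crossingNumber n ∧ crossingNumber n₂ < crossingNumber n := by
  simp only [NoCrossM, not_forall, not_not] at h
  obtain ⟨_, _, ⟨a, c, hac, hnac, rfl⟩, ⟨b, d, hbd, hnbd, rfl⟩, hab, hbc, hcd⟩ := h
  obtain ⟨n₀, rfl⟩ := exists_eq_add_singleArc hnbd
  obtain ⟨n', rfl⟩ : ∃ n', n₀ = n' + singleArc a c := by
    refine exists_eq_add_singleArc ?_
    simpa [singleArc, Fin.ne_of_lt hab] using hnac
  refine ⟨n' + singleArc a b + singleArc c d, n' + singleArc a d + singleArc b c, ?_, ?_, ?_⟩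
  · rw [monM_add_singleArc_add_singleArc _ hac hbd, Mang_mul_Mang, mul_add,
      monM_add_singleArc_add_singleArc _ hab hcd,
      monM_add_singleArc_add_singleArc _ (hab.trans (hbc.trans hcd)) hbc]
  all_goals
    have hcross : crossSym a c b d = 1 := by simp only [crossSym, crossInd]; split_ifs <;> omega
    simp only [crossingNumber_add_singleArc_add_singleArc, hcross]
  · have hdisj : crossSym a b c d = 0 := by simp only [crossSym, crossInd]; split_ifs <;> omega
    have := crossingsWith_add_le_of_crossSym_le n' (crossSym_disjoint_le hab hbc hcd)
    omega
  · have hnest : crossSym a d b c = 0 := by simp only [crossSym, crossInd]; split_ifs <;> omega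
    have := crossingsWith_add_le_of_crossSym_le n' (crossSym_nested_le hab hbc hcd)
    omega

end Monomials

theorem statement13 (N : ℕ) (n : Fin N → Fin N → ℕ) :
    monM n ∈ Submodule.span ℂ
      { q : PR N | ∃ m : Fin N → Fin N → ℕ, NoCrossM m ∧ q = monM m } := by
  induction n using (measure crossingNumber).wf.induction with
  | h n ih =>
    by_cases hn : NoCrossM n
    · exact Submodule.subset_span ⟨n, hn, rfl⟩
    obtain ⟨n₁, n₂, heq, h₁, h₂⟩ := exists_resolution_of_not_noCrossM hn
    rw [heq]
    exact add_mem (ih n₁ h₁) (ih n₂ h₂)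
end
end

section
/- Distinct monomials M_{i₁j₁}^{n₁} ⋯ M_{i_k j_k}^{n_k} in the classical angular momenta that have no crossings (pairwise distinct pairs (i_s, j_s) with 1 ≤ i_s < j_s ≤ N, exponents n_s ≥ 1, together with the empty monomial 1) are linearly independent over ℂ in the polynomial ring ℂ[x,p]. -/
/-!
STATEMENT 14: distinct no-crossing monomials in the classical angular momenta (including the
empty monomial `1`) are linearly independent over ℂ in `ℂ[x, p]`.
-/

noncomputable section

open Finset MvPolynomial

namespace S14

variable {N : ℕ}

/-- The weight of an exponent vector: `p_k` counts `+k`, `x_k` counts `-k`. -/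
def W (d : (Fin N ⊕ Fin N) →₀ ℕ) : ℤ :=
  (∑ k : Fin N, (d (Sum.inr k) : ℤ) * k) - ∑ k : Fin N, (d (Sum.inl k) : ℤ) * k

lemma W_add (a b : (Fin N ⊕ Fin N) →₀ ℕ) : W (a + b) = W a + W b := by
  simp only [W, Finsupp.add_apply, Nat.cast_add, add_mul, Finset.sum_add_distrib]
  ring

lemma W_zero : W (0 : (Fin N ⊕ Fin N) →₀ ℕ) = 0 := by simp [W]

/-- `f` has leading monomial `e` (with coefficient 1), all other monomials
having strictly smaller weight. -/
def Lead (f : PR N) (e : (Fin N ⊕ Fin N) →₀ ℕ) : Prop :=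
  coeff e f = 1 ∧ ∀ d, coeff d f ≠ 0 → d ≠ e → W d < W e

lemma lead_one : Lead (1 : PR N) 0 := by
  constructor
  · simp
  · intro d hd hne
    exact absurd (by rw [MvPolynomial.coeff_one, if_neg (fun h => hne h.symm)]) hd

lemma lead_mul {f g : PR N} {e e' : (Fin N ⊕ Fin N) →₀ ℕ}
    (hf : Lead f e) (hg : Lead g e') : Lead (f * g) (e + e') := by
  have key : ∀ a b : (Fin N ⊕ Fin N) →₀ ℕ, coeff a f ≠ 0 → coeff b g ≠ 0 →
      W a + W b ≤ W e + W e' ∧ (W a + W b = W e + W e' → a = e ∧ b = e') := by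
    intro a b ha hb
    rcases eq_or_ne a e with rfl | hae
    · rcases eq_or_ne b e' with rfl | hbe
      · exact ⟨le_rfl, fun _ => ⟨rfl, rfl⟩⟩
      · have := hg.2 b hb hbe
        exact ⟨by omega, fun h => by omega⟩
    · have h1 := hf.2 a ha hae
      have h2 : W b ≤ W e' := by
        rcases eq_or_ne b e' with rfl | hbe
        · exact le_rfl
        · exact le_of_lt (hg.2 b hb hbe)
      exact ⟨by omega, fun h => by omega⟩
  constructor
  · rw [MvPolynomial.coeff_mul]
    have hzero : ∀ x ∈ Finset.HasAntidiagonal.antidiagonal (e + e'), x ≠ (e, e') →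
        coeff x.1 f * coeff x.2 g = 0 := by
      intro x hx hne
      by_contra hxne
      have hx1 : coeff x.1 f ≠ 0 := fun h => hxne (by simp [h])
      have hx2 : coeff x.2 g ≠ 0 := fun h => hxne (by simp [h])
      have hsum : x.1 + x.2 = e + e' := Finset.HasAntidiagonal.mem_antidiagonal.mp hx
      have hW : W x.1 + W x.2 = W e + W e' := by
        have := W_add x.1 x.2
        rw [hsum, W_add] at this
        omega
      have := (key x.1 x.2 hx1 hx2).2 hW
      exact hne (Prod.ext this.1 this.2)
    rw [Finset.sum_eq_single_of_mem (e, e') (Finset.HasAntidiagonal.mem_antidiagonal.mpr rfl) hzero,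
      hf.1, hg.1, one_mul]
  · intro d hd hne
    rw [MvPolynomial.coeff_mul] at hd
    obtain ⟨x, hx, hxne⟩ := Finset.exists_ne_zero_of_sum_ne_zero hd
    have hx1 : coeff x.1 f ≠ 0 := fun h => hxne (by simp [h])
    have hx2 : coeff x.2 g ≠ 0 := fun h => hxne (by simp [h])
    have hsum : x.1 + x.2 = d := Finset.HasAntidiagonal.mem_antidiagonal.mp hx
    have hWd : W d = W x.1 + W x.2 := by rw [← hsum, W_add]
    have hle := (key x.1 x.2 hx1 hx2).1
    rw [W_add]
    rcases lt_or_eq_of_le hle with h | h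
    · omega
    · obtain ⟨h1, h2⟩ := (key x.1 x.2 hx1 hx2).2 h
      exact absurd (by rw [← hsum, h1, h2]) hne

lemma lead_pow {f : PR N} {e : (Fin N ⊕ Fin N) →₀ ℕ} (hf : Lead f e) (n : ℕ) :
    Lead (f ^ n) (n • e) := by
  induction n with
  | zero => simpa using lead_one
  | succ k ih =>
      rw [pow_succ, succ_nsmul]
      exact lead_mul ih hf

lemma lead_prod {ι : Type*} (s : Finset ι) (f : ι → PR N)
    (e : ι → (Fin N ⊕ Fin N) →₀ ℕ) (h : ∀ i ∈ s, Lead (f i) (e i)) :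
    Lead (∏ i ∈ s, f i) (∑ i ∈ s, e i) := by
  induction s using Finset.cons_induction with
  | empty => simpa using lead_one
  | cons a s ha ih =>
      rw [Finset.prod_cons, Finset.sum_cons]
      exact lead_mul (h a (Finset.mem_cons_self a s))
        (ih fun i hi => h i (Finset.mem_cons.mpr (Or.inr hi)))

/-- The leading exponent of `Mang i j`. -/
def eA (i j : Fin N) : (Fin N ⊕ Fin N) →₀ ℕ :=
  Finsupp.single (Sum.inl i) 1 + Finsupp.single (Sum.inr j) 1

lemma eA_apply_inl (i j k : Fin N) :
    eA i j (Sum.inl k) = if i = k then 1 else 0 := by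
  simp [eA, Finsupp.single_apply]

lemma eA_apply_inr (i j k : Fin N) :
    eA i j (Sum.inr k) = if j = k then 1 else 0 := by
  simp [eA, Finsupp.single_apply]

lemma W_eA (i j : Fin N) : W (eA i j) = (j : ℤ) - (i : ℤ) := by
  unfold W
  have h1 : (∑ k : Fin N, (eA i j (Sum.inr k) : ℤ) * k) = (j : ℤ) := by
    rw [Finset.sum_eq_single j]
    · simp [eA_apply_inr]
    · intro b _ hb
      simp [eA_apply_inr, Ne.symm hb]
    · simp
  have h2 : (∑ k : Fin N, (eA i j (Sum.inl k) : ℤ) * k) = (i : ℤ) := by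
    rw [Finset.sum_eq_single i]
    · simp [eA_apply_inl]
    · intro b _ hb
      simp [eA_apply_inl, Ne.symm hb]
    · simp
  rw [h1, h2]

lemma eA_ne {i j : Fin N} (hij : i ≠ j) : eA i j ≠ eA j i := by
  intro h
  have := congrArg (fun f => f (Sum.inl i)) h
  simp only [eA_apply_inl] at this
  simp [hij.symm] at this

lemma Mang_eq (i j : Fin N) :
    Mang i j = monomial (eA i j) 1 - monomial (eA j i) 1 := by
  unfold Mang eA
  rw [MvPolynomial.X, MvPolynomial.X, MvPolynomial.X, MvPolynomial.X,
    monomial_mul, monomial_mul, one_mul]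

lemma coeff_Mang (i j : Fin N) (d : (Fin N ⊕ Fin N) →₀ ℕ) :
    coeff d (Mang i j) =
      (if eA i j = d then 1 else 0) - (if eA j i = d then 1 else 0) := by
  rw [Mang_eq, MvPolynomial.coeff_sub, MvPolynomial.coeff_monomial,
    MvPolynomial.coeff_monomial]

lemma lead_Mang {i j : Fin N} (hij : i < j) : Lead (Mang i j) (eA i j) := by
  have hne : i ≠ j := ne_of_lt hij
  constructor
  · rw [coeff_Mang, if_pos rfl, if_neg (eA_ne hne.symm)]
    norm_num
  · intro d hd hdne
    rw [coeff_Mang, if_neg (fun h => hdne h.symm)] at hd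
    have : eA j i = d := by
      by_contra h
      rw [if_neg h] at hd
      simp at hd
    rw [← this, W_eA, W_eA]
    have : (i : ℤ) < (j : ℤ) := by exact_mod_cast hij
    omega

/-- The leading exponent of `monM n`. -/
def D (n : Fin N → Fin N → ℕ) : (Fin N ⊕ Fin N) →₀ ℕ :=
  ∑ i, ∑ j, if i < j then n i j • eA i j else 0

lemma lead_monM (n : Fin N → Fin N → ℕ) : Lead (monM n) (D n) := by
  unfold monM D
  refine lead_prod _ _ _ fun i _ => lead_prod _ _ _ fun j _ => ?_
  split_ifs with h
  · exact lead_pow (lead_Mang h) (n i j)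
  · simpa using lead_one

lemma D_inl (n : Fin N → Fin N → ℕ) (hsupp : ∀ i j : Fin N, ¬ i < j → n i j = 0)
    (k : Fin N) : D n (Sum.inl k) = ∑ j, n k j := by
  unfold D
  rw [Finsupp.finset_sum_apply]
  have step : ∀ i : Fin N,
      (∑ j, if i < j then n i j • eA i j else 0) (Sum.inl k)
        = if i = k then ∑ j, n i j else 0 := by
    intro i
    rw [Finsupp.finset_sum_apply]
    have : ∀ j : Fin N, ((if i < j then n i j • eA i j else 0) : (Fin N ⊕ Fin N) →₀ ℕ) (Sum.inl k)
        = if i = k then n i j else 0 := by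
      intro j
      split_ifs with h1 h2 h2
      · subst h2
        simp [Finsupp.smul_apply, eA_apply_inl]
      · simp [Finsupp.smul_apply, eA_apply_inl, h2]
      · simp [hsupp i j h1]
      · simp
    rw [Finset.sum_congr rfl fun j _ => this j]
    split_ifs with h <;> simp
  rw [Finset.sum_congr rfl fun i _ => step i, Finset.sum_ite_eq' Finset.univ k]
  simp

lemma D_inr (n : Fin N → Fin N → ℕ) (hsupp : ∀ i j : Fin N, ¬ i < j → n i j = 0)
    (k : Fin N) : D n (Sum.inr k) = ∑ i, n i k := by
  unfold D
  rw [Finsupp.finset_sum_apply]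
  have step : ∀ i : Fin N,
      (∑ j, if i < j then n i j • eA i j else 0) (Sum.inr k) = n i k := by
    intro i
    rw [Finsupp.finset_sum_apply]
    have : ∀ j : Fin N, ((if i < j then n i j • eA i j else 0) : (Fin N ⊕ Fin N) →₀ ℕ) (Sum.inr k)
        = if j = k then n i j else 0 := by
      intro j
      split_ifs with h1 h2 h2
      · subst h2
        simp [Finsupp.smul_apply, eA_apply_inr]
      · simp [Finsupp.smul_apply, eA_apply_inr, h2]
      · simp [hsupp i j h1]
      · simp
    rw [Finset.sum_congr rfl fun j _ => this j, Finset.sum_ite_eq' Finset.univ k]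
    simp
  rw [Finset.sum_congr rfl fun i _ => step i]

/-- Key combinatorial step: in a no-crossing configuration, with `j0` the first
vertex with positive in-degree and `i0` the last vertex before `j0` with positive
out-degree, the arc `(i0, j0)` is present. -/
lemma key_arc (n : Fin N → Fin N → ℕ)
    (hs : ∀ i j : Fin N, ¬ i < j → n i j = 0) (hc : NoCrossM n)
    (j0 i0 : Fin N)
    (hj0 : (∑ i, n i j0) ≠ 0)
    (hj0min : ∀ v : Fin N, (∑ i, n i v) ≠ 0 → j0 ≤ v)
    (hi0lt : i0 < j0) (hi0row : (∑ j, n i0 j) ≠ 0)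
    (hi0max : ∀ u : Fin N, u < j0 → (∑ j, n u j) ≠ 0 → u ≤ i0) :
    n i0 j0 ≠ 0 := by
  intro hcontra
  -- get an arc ending at j0
  obtain ⟨i, _, hi⟩ := Finset.exists_ne_zero_of_sum_ne_zero hj0
  have hij0 : i < j0 := by
    by_contra h
    exact hi (hs i j0 h)
  have hii0 : i ≤ i0 := hi0max i hij0 (by
    intro h
    exact hi ((Finset.sum_eq_zero_iff.mp h) j0 (Finset.mem_univ j0)))
  have hine : i ≠ i0 := by
    rintro rfl
    exact hi hcontra
  have hii0' : i < i0 := lt_of_le_of_ne hii0 hine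
  -- i0 has an outgoing arc
  obtain ⟨j', _, hj'⟩ := Finset.exists_ne_zero_of_sum_ne_zero hi0row
  have hi0j' : i0 < j' := by
    by_contra h
    exact hj' (hs i0 j' h)
  have hj0j' : j0 ≤ j' := hj0min j' (by
    intro h
    exact hj' ((Finset.sum_eq_zero_iff.mp h) i0 (Finset.mem_univ i0)))
  have hj0ne : j0 ≠ j' := by
    rintro rfl
    exact hj' hcontra
  have hj0j'' : j0 < j' := lt_of_le_of_ne hj0j' hj0ne
  exact hc ((i : ℕ), (j0 : ℕ)) ((i0 : ℕ), (j' : ℕ))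
    ⟨i, j0, hij0, hi, rfl⟩ ⟨i0, j', hi0j', hj', rfl⟩
    ⟨by exact_mod_cast hii0', by exact_mod_cast hi0lt, by exact_mod_cast hj0j''⟩

/-- uniqueness: a no-crossing configuration is determined by its row and column sums. -/
lemma nocross_unique (T : ℕ) : ∀ (n n' : Fin N → Fin N → ℕ),
    (∑ i, ∑ j, n i j = T) →
    (∀ i j : Fin N, ¬ i < j → n i j = 0) → (∀ i j : Fin N, ¬ i < j → n' i j = 0) →
    NoCrossM n → NoCrossM n' →
    (∀ i, ∑ j, n i j = ∑ j, n' i j) → (∀ j, ∑ i, n i j = ∑ i, n' i j) →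
    n = n' := by
  induction T using Nat.strong_induction_on with
  | _ T ih =>
  intro n n' hT hs hs' hc hc' hr hcol
  by_cases hT0 : T = 0
  · subst hT0
    funext a b
    have h1 : n a b = 0 :=
      Finset.sum_eq_zero_iff.mp
        ((Finset.sum_eq_zero_iff.mp hT) a (Finset.mem_univ a)) b (Finset.mem_univ b)
    have hT' : ∑ i, ∑ j, n' i j = 0 := by
      rw [← hT]
      exact Finset.sum_congr rfl fun i _ => (hr i).symm
    have h2 : n' a b = 0 :=
      Finset.sum_eq_zero_iff.mp
        ((Finset.sum_eq_zero_iff.mp hT') a (Finset.mem_univ a)) b (Finset.mem_univ b)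
    rw [h1, h2]
  · -- find j0 : first vertex with positive in-degree
    have hcolsum : ∑ v, ∑ i, n i v = T := by rw [← hT]; exact Finset.sum_comm
    have hex : ∃ v : Fin N, (∑ i, n i v) ≠ 0 := by
      by_contra h
      push_neg at h
      exact hT0 (by rw [← hcolsum]; exact Finset.sum_eq_zero fun v _ => h v)
    set Sc : Finset (Fin N) := Finset.univ.filter (fun v => (∑ i, n i v) ≠ 0) with hSc
    have hScne : Sc.Nonempty := by
      obtain ⟨v, hv⟩ := hex
      exact ⟨v, Finset.mem_filter.mpr ⟨Finset.mem_univ v, hv⟩⟩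
    set j0 : Fin N := Sc.min' hScne with hj0def
    have hj0mem : (∑ i, n i j0) ≠ 0 := (Finset.mem_filter.mp (Sc.min'_mem hScne)).2
    have hj0min : ∀ v : Fin N, (∑ i, n i v) ≠ 0 → j0 ≤ v := fun v hv =>
      Sc.min'_le v (Finset.mem_filter.mpr ⟨Finset.mem_univ v, hv⟩)
    -- find i0 : last vertex < j0 with positive out-degree
    have hexi : ∃ u : Fin N, u < j0 ∧ (∑ j, n u j) ≠ 0 := by
      obtain ⟨i, _, hi⟩ := Finset.exists_ne_zero_of_sum_ne_zero hj0mem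
      refine ⟨i, ?_, ?_⟩
      · by_contra h
        exact hi (hs i j0 h)
      · intro h
        exact hi ((Finset.sum_eq_zero_iff.mp h) j0 (Finset.mem_univ j0))
    set Sr : Finset (Fin N) :=
      Finset.univ.filter (fun u => u < j0 ∧ (∑ j, n u j) ≠ 0) with hSr
    have hSrne : Sr.Nonempty := by
      obtain ⟨u, hu1, hu2⟩ := hexi
      exact ⟨u, Finset.mem_filter.mpr ⟨Finset.mem_univ u, hu1, hu2⟩⟩
    set i0 : Fin N := Sr.max' hSrne with hi0def
    have hi0max : ∀ u : Fin N, u < j0 → (∑ j, n u j) ≠ 0 → u ≤ i0 := fun u h1 h2 =>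
      Sr.le_max' u (Finset.mem_filter.mpr ⟨Finset.mem_univ u, h1, h2⟩)
    -- the arc (i0, j0) is in both n and n'
    have hi0lt : i0 < j0 := (Finset.mem_filter.mp (Sr.max'_mem hSrne)).2.1
    have hi0row : (∑ j, n i0 j) ≠ 0 := (Finset.mem_filter.mp (Sr.max'_mem hSrne)).2.2
    have harc : n i0 j0 ≠ 0 := key_arc n hs hc j0 i0 hj0mem hj0min hi0lt hi0row hi0max
    have harc' : n' i0 j0 ≠ 0 := by
      refine key_arc n' hs' hc' j0 i0 ?_ ?_ hi0lt ?_ ?_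
      · rw [← hcol j0]; exact hj0mem
      · intro v hv
        exact hj0min v (by rw [hcol v]; exact hv)
      · rw [← hr i0]; exact hi0row
      · intro u h1 h2
        exact hi0max u h1 (by rw [hr u]; exact h2)
    -- remove the arc
    set del : Fin N → Fin N → ℕ := fun a b => if a = i0 ∧ b = j0 then 1 else 0 with hdel
    set m : Fin N → Fin N → ℕ := fun a b => n a b - del a b with hm
    set m' : Fin N → Fin N → ℕ := fun a b => n' a b - del a b with hm'
    have hneq : ∀ a b, n a b = m a b + del a b := by
      intro a b
      show n a b = n a b - del a b + del a b
      by_cases h : a = i0 ∧ b = j0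
      · have hd1 : del a b = 1 := by simp [hdel, h.1, h.2]
        have hge : 1 ≤ n a b := by
          rw [h.1, h.2]
          exact Nat.one_le_iff_ne_zero.mpr harc
        omega
      · have hd0 : del a b = 0 := by simp [hdel, h]
        omega
    have hneq' : ∀ a b, n' a b = m' a b + del a b := by
      intro a b
      show n' a b = n' a b - del a b + del a b
      by_cases h : a = i0 ∧ b = j0
      · have hd1 : del a b = 1 := by simp [hdel, h.1, h.2]
        have hge : 1 ≤ n' a b := by
          rw [h.1, h.2]
          exact Nat.one_le_iff_ne_zero.mpr harc'
        omega
      · have hd0 : del a b = 0 := by simp [hdel, h]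
        omega
    have hdelsum : ∑ i, ∑ j, del i j = 1 := by
      simp [hdel, ite_and]
    have hmsum : (∑ i, ∑ j, m i j) + 1 = T := by
      rw [← hT, ← hdelsum, ← Finset.sum_add_distrib]
      refine Finset.sum_congr rfl fun i _ => ?_
      rw [← Finset.sum_add_distrib]
      exact Finset.sum_congr rfl fun j _ => (hneq i j).symm
    have hmeq : m = m' := by
      refine ih (∑ i, ∑ j, m i j) (by omega) m m' rfl ?_ ?_ ?_ ?_ ?_ ?_
      · intro i j h
        simp [hm, hs i j h]
      · intro i j h
        simp [hm', hs' i j h]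
      · intro p q hp hq
        refine hc p q ?_ ?_
        · obtain ⟨i, j, h1, h2, h3⟩ := hp
          exact ⟨i, j, h1, fun h => h2 (by simp [hm, h]), h3⟩
        · obtain ⟨i, j, h1, h2, h3⟩ := hq
          exact ⟨i, j, h1, fun h => h2 (by simp [hm, h]), h3⟩
      · intro p q hp hq
        refine hc' p q ?_ ?_
        · obtain ⟨i, j, h1, h2, h3⟩ := hp
          exact ⟨i, j, h1, fun h => h2 (by simp [hm', h]), h3⟩
        · obtain ⟨i, j, h1, h2, h3⟩ := hq
          exact ⟨i, j, h1, fun h => h2 (by simp [hm', h]), h3⟩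
      · intro i
        have e1 : ∑ j, n i j = (∑ j, m i j) + ∑ j, del i j := by
          rw [← Finset.sum_add_distrib]
          exact Finset.sum_congr rfl fun j _ => hneq i j
        have e2 : ∑ j, n' i j = (∑ j, m' i j) + ∑ j, del i j := by
          rw [← Finset.sum_add_distrib]
          exact Finset.sum_congr rfl fun j _ => hneq' i j
        have := hr i
        omega
      · intro j
        have e1 : ∑ i, n i j = (∑ i, m i j) + ∑ i, del i j := by
          rw [← Finset.sum_add_distrib]
          exact Finset.sum_congr rfl fun i _ => hneq i j
        have e2 : ∑ i, n' i j = (∑ i, m' i j) + ∑ i, del i j := by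
          rw [← Finset.sum_add_distrib]
          exact Finset.sum_congr rfl fun i _ => hneq' i j
        have := hcol j
        omega
    funext a b
    rw [hneq a b, hneq' a b, hmeq]

end S14

open S14 in
theorem statement14 (N : ℕ) :
    LinearIndependent ℂ
      (fun m : { n : Fin N → Fin N → ℕ //
          (∀ i j : Fin N, ¬ i < j → n i j = 0) ∧ NoCrossM n } => monM m.1) := by
  classical
  rw [linearIndependent_iff']
  intro s g hsum m1 hm1s
  by_contra hg
  set t := s.filter (fun m => g m ≠ 0) with ht
  have htne : t.Nonempty := ⟨m1, Finset.mem_filter.mpr ⟨hm1s, hg⟩⟩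
  obtain ⟨m0, hm0t, hmax⟩ := Finset.exists_max_image t (fun m => W (D m.1)) htne
  have hm0s : m0 ∈ s := (Finset.mem_filter.mp hm0t).1
  have hgm0 : g m0 ≠ 0 := (Finset.mem_filter.mp hm0t).2
  have hco : coeff (D m0.1) (∑ m ∈ s, g m • monM m.1) = g m0 := by
    rw [MvPolynomial.coeff_sum]
    rw [Finset.sum_eq_single_of_mem m0 hm0s]
    · rw [MvPolynomial.coeff_smul, (lead_monM m0.1).1, smul_eq_mul, mul_one]
    · intro m hms hne
      rw [MvPolynomial.coeff_smul]
      by_cases hgm : g m = 0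
      · rw [hgm, zero_smul]
      · have hmt : m ∈ t := Finset.mem_filter.mpr ⟨hms, hgm⟩
        have hc0 : coeff (D m0.1) (monM m.1) = 0 := by
          by_contra hc
          by_cases hDD : D m.1 = D m0.1
          · have hrows : ∀ i, ∑ j, m.1 i j = ∑ j, m0.1 i j := by
              intro i
              rw [← D_inl m.1 m.2.1 i, ← D_inl m0.1 m0.2.1 i, hDD]
            have hcols : ∀ j, ∑ i, m.1 i j = ∑ i, m0.1 i j := by
              intro j
              rw [← D_inr m.1 m.2.1 j, ← D_inr m0.1 m0.2.1 j, hDD]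
            exact hne (Subtype.ext (nocross_unique (∑ i, ∑ j, m.1 i j) m.1 m0.1 rfl
              m.2.1 m0.2.1 m.2.2 m0.2.2 hrows hcols))
          · have hlt := (lead_monM m.1).2 (D m0.1) hc (fun h => hDD h.symm)
            exact absurd (hmax m hmt) (not_le.mpr hlt)
        rw [hc0, smul_zero]
  rw [hsum, MvPolynomial.coeff_zero] at hco
  exact hgm0 hco.symm
end
end
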